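/- arXiv:math/0601179 — 3 statements merged into one kernel-verified Lean document; each statement's English description precedes it below -/
import Mathlib

section
/- Let G act by isometries on a metric space X, discontinuously (discrete orbits) and cocompactly (there is a compact K ⊆ X with X = ⋃_{g∈G} gK). Then there is a finite subset Q̂ ⊆ G and finitely many point-stabilizers H_1, …, H_n (stabilizers of points in K) with {g ∈ G : gK ∩ K ≠ ∅} ⊆ Q̂·(H_1 ∪ ⋯ ∪ H_n). -/
open Pointwise

/-- For a discontinuous, cocompact isometric action of `G` on `X` with
compact fundamental set `K`, there are a finite set `Q̂ ⊆ G` and finitely many stabilizers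
`H₁, …, Hₙ` of points of `K` such that every `g` with `gK ∩ K ≠ ∅` lies in
`Q̂·(H₁ ∪ ⋯ ∪ Hₙ)`. -/
theorem finitely_many_cosets_of_returning_elements
    (G X : Type*) [Group G] [MetricSpace X] [MulAction G X] [IsIsometricSMul G X]
    (hdisc : ∀ x : X, ∃ ε > (0 : ℝ), ∀ g : G, g • x ≠ x → ε < dist x (g • x))
    (K : Set X) (hK : IsCompact K) (hcov : ∀ y : X, ∃ g : G, y ∈ g • K) :
    ∃ (Q : Finset G) (n : ℕ) (H : Fin n → Subgroup G),
      (∀ r, ∃ x ∈ K, H r = MulAction.stabilizer G x) ∧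
      ∀ g : G, ((g • K) ∩ K).Nonempty →
        ∃ s ∈ Q, ∃ r : Fin n, ∃ h ∈ H r, g = s * h := by
  classical
  -- choose the separation constant at each point
  choose ε hε0 hεsep using hdisc
  -- finite cover of `K` by balls `ball x (ε x / 4)` with centers in `K`
  obtain ⟨t, htK, htcov⟩ :=
    hK.elim_nhds_subcover (fun x => Metric.ball x (ε x / 4))
      (fun x _ => Metric.ball_mem_nhds x (by linarith [hε0 x]))
  -- for each `x`, a finite cover of `K` by balls of radius `ε x / 4`
  have hsub : ∀ x : X, ∃ s : Finset X, K ⊆ ⋃ c ∈ s, Metric.ball c (ε x / 4) := by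
    intro x
    obtain ⟨s, _, hs⟩ :=
      hK.elim_nhds_subcover (fun c => Metric.ball c (ε x / 4))
        (fun c _ => Metric.ball_mem_nhds c (by linarith [hε0 x]))
    exact ⟨s, hs⟩
  choose sfin hsfin using hsub
  -- selection function: for each pair `(x, c)`, a group element moving `x` close to `c`,
  -- if one exists
  set sel : X → X → G := fun x c =>
    if h : ∃ g : G, dist (g • x) c < ε x / 2 then h.choose else 1 with hsel
  have hselspec : ∀ x c : X, (∃ g : G, dist (g • x) c < ε x / 2) →
      dist ((sel x c) • x) c < ε x / 2 := by
    intro x c h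
    simp only [hsel, dif_pos h]
    exact h.choose_spec
  refine ⟨t.biUnion (fun x => (sfin x).image (sel x)), t.card,
    fun r => MulAction.stabilizer G ((t.equivFin.symm r : {a // a ∈ t}) : X), ?_, ?_⟩
  · intro r
    exact ⟨_, htK _ (t.equivFin.symm r).2, rfl⟩
  · rintro g ⟨z, hz1, hz2⟩
    obtain ⟨y, hyK, rfl⟩ := hz1
    -- find the covering ball containing `y`
    have hy := htcov hyK
    simp only [Set.mem_iUnion] at hy
    obtain ⟨x, hxt, hyx⟩ := hy
    -- find the covering ball containing `z = g • y`
    have hz := hsfin x hz2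
    simp only [Set.mem_iUnion] at hz
    obtain ⟨c, hcs, hzc⟩ := hz
    rw [Metric.mem_ball] at hyx hzc
    have hdistgx : dist (g • x) c < ε x / 2 := by
      have h1 : dist (g • x) (g • y) = dist x y := dist_smul g x y
      calc dist (g • x) c ≤ dist (g • x) (g • y) + dist (g • y) c := dist_triangle _ _ _
        _ < ε x / 4 + ε x / 4 := by rw [h1]; exact add_lt_add (by rwa [dist_comm]) hzc
        _ = ε x / 2 := by ring
    set s₀ := sel x c with hs₀
    have hs₀spec : dist (s₀ • x) c < ε x / 2 := hselspec x c ⟨g, hdistgx⟩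
    have hclose : dist (g • x) (s₀ • x) < ε x := by
      calc dist (g • x) (s₀ • x) ≤ dist (g • x) c + dist c (s₀ • x) := dist_triangle _ _ _
        _ < ε x / 2 + ε x / 2 := add_lt_add hdistgx (by rwa [dist_comm])
        _ = ε x := by ring
    have hfix : (g⁻¹ * s₀) • x = x := by
      by_contra hne
      have := hεsep x (g⁻¹ * s₀) hne
      rw [mul_smul] at this
      have heq : dist x (g⁻¹ • s₀ • x) = dist (g • x) (s₀ • x) := by
        rw [← dist_smul g x (g⁻¹ • s₀ • x), smul_inv_smul]
      linarith [heq ▸ this]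
    have hfix' : g⁻¹ • (s₀ • x) = x := by rw [← mul_smul]; exact hfix
    have hgx : g • x = s₀ • x := by
      have h2 := congrArg (g • ·) hfix'
      simp only [smul_inv_smul] at h2
      exact h2.symm
    refine ⟨s₀, ?_, t.equivFin ⟨x, hxt⟩, s₀⁻¹ * g, ?_, by group⟩
    · exact Finset.mem_biUnion.2 ⟨x, hxt, Finset.mem_image.2 ⟨c, hcs, rfl⟩⟩
    · rw [MulAction.mem_stabilizer_iff]
      simp only [Equiv.symm_apply_apply]
      rw [mul_smul, hgx, inv_smul_smul]
end

section
/- Let G act by isometries on a metric space X, discontinuously and cocompactly. Then there are only finitely many conjugacy classes of maximal isotropy subgroups: the set of subgroups of G that are maximal (under inclusion) among nontrivial point-stabilizers, taken up to conjugacy in G, is finite. -/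
open Pointwise

/-- `H` is a maximal isotropy subgroup of the action of `G` on `X`: it is the stabilizer
of some point, it is nontrivial, and it is not properly contained in any other
nontrivial point-stabilizer. -/
def IsMaximalIsotropy (G X : Type*) [Group G] [MulAction G X] (H : Subgroup G) : Prop :=
  (∃ x : X, H = MulAction.stabilizer G x) ∧ H ≠ ⊥ ∧
    ∀ x : X, MulAction.stabilizer G x ≠ ⊥ → H ≤ MulAction.stabilizer G x →
      H = MulAction.stabilizer G x

open MulAction

/-!
Discontinuity gives each point `x` a radius `ε x` below which no group element moves `x`;
any point within `ε x / 2` of `x` then has its stabilizer inside that of `x`. Finitely many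
such half-balls cover the compact set `K`, whose translates cover `X`. So every stabilizer is
conjugate to a subgroup of one of finitely many stabilizers, and a maximal one equals it.
-/

theorem IsMaximalIsotropy.eq_stabilizer_of_le {G X : Type*} [Group G] [MulAction G X]
    {H : Subgroup G} (hH : IsMaximalIsotropy G X H) {x : X} (hle : H ≤ stabilizer G x) :
    H = stabilizer G x :=
  hH.2.2 x (ne_bot_of_le_ne_bot hH.2.1 hle) hle

theorem stabilizer_le_of_dist_lt {G X : Type*} [Group G] [PseudoMetricSpace X]
    [MulAction G X] [IsIsometricSMul G X] {x y : X} {ε : ℝ}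
    (hε : ∀ g : G, g • x ≠ x → ε < dist x (g • x)) (hxy : dist x y < ε / 2) :
    stabilizer G y ≤ stabilizer G x := by
  intro g hg
  rw [mem_stabilizer_iff] at hg ⊢
  by_contra hgx
  have : dist x (g • x) < ε :=
    calc dist x (g • x) ≤ dist x y + dist y (g • x) := dist_triangle _ _ _
      _ = dist x y + dist (g • y) (g • x) := by rw [hg]
      _ = 2 * dist x y := by rw [dist_smul, dist_comm y x]; ring
      _ < ε := by linarith
  exact (hε g hgx).not_gt this

theorem stabilizer_smul_le_stabilizer_smul {G X : Type*} [Group G] [MulAction G X]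
    (g : G) {x y : X} (hle : stabilizer G x ≤ stabilizer G y) :
    stabilizer G (g • x) ≤ stabilizer G (g • y) := by
  rw [stabilizer_smul_eq_stabilizer_map_conj, stabilizer_smul_eq_stabilizer_map_conj]
  exact Subgroup.map_mono hle

/-- A discontinuous, cocompact isometric action has only finitely many
conjugacy classes of maximal isotropy subgroups. -/
theorem finitely_many_conjugacy_classes_of_maximal_isotropy
    (G X : Type*) [Group G] [MetricSpace X] [MulAction G X] [IsIsometricSMul G X]
    (hdisc : ∀ x : X, ∃ ε > (0 : ℝ), ∀ g : G, g • x ≠ x → ε < dist x (g • x))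
    (K : Set X) (hK : IsCompact K) (hcov : ∀ y : X, ∃ g : G, y ∈ g • K) :
    ∃ S : Finset (Subgroup G), ∀ H : Subgroup G, IsMaximalIsotropy G X H →
      ∃ H' ∈ S, ∃ g : G, H = Subgroup.map (MulAut.conj g).toMonoidHom H' := by
  classical
  choose ε hεpos hε using hdisc
  obtain ⟨t, -, hcover⟩ := hK.elim_nhds_subcover (fun x => Metric.ball x (ε x / 2))
    (fun x _ => Metric.ball_mem_nhds x (half_pos (hεpos x)))
  refine ⟨t.image (stabilizer G), fun H hH => ?_⟩
  obtain ⟨y, rfl⟩ := hH.1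
  obtain ⟨g, k, hkK, rfl⟩ := hcov y
  obtain ⟨i, hit, hk_ball⟩ := Set.mem_iUnion₂.mp (hcover hkK)
  have hki : stabilizer G k ≤ stabilizer G i :=
    stabilizer_le_of_dist_lt (hε i) (Metric.mem_ball'.mp hk_ball)
  refine ⟨stabilizer G i, Finset.mem_image_of_mem _ hit, g, ?_⟩
  rw [← stabilizer_smul_eq_stabilizer_map_conj]
  exact hH.eq_stabilizer_of_le (stabilizer_smul_le_stabilizer_smul g hki)
end

section
/- Let G be a group acting by isometries on a length space X, discontinuously and cocompactly with compact fundamental set K containing a basepoint x₀, and let ε > 0 satisfy: for all g ∈ G, either gK ∩ K ≠ ∅ or d(gK, K) > ε. Suppose every g with gK ∩ K ≠ ∅ lies within distance 2 of the identity in a graph metric d_Γ on G (e.g., the coned-off Cayley graph restricted to the orbit of the base vertex). Then for all p, q in the G-orbit of the base vertex, d_Γ(p, q) < (2/ε)·d_X(f(p), f(q)) + 4, where f is the orbit map g·v₀ ↦ g·x₀. In particular the orbit map is a quasi-isometric embedding. -/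
open Pointwise

/-- A metric space is a length space: approximate midpoints always exist. -/
def IsLengthSpace (X : Type*) [MetricSpace X] : Prop :=
  ∀ x y : X, ∀ ε > (0 : ℝ), ∃ z : X,
    dist x z ≤ dist x y / 2 + ε ∧ dist z y ≤ dist x y / 2 + ε

/-- The distance between two subsets of a metric space. -/
noncomputable def setDist {X : Type*} [MetricSpace X] (A B : Set X) : ℝ :=
  sInf ((fun p : X × X => dist p.1 p.2) '' (A ×ˢ B))

lemma setDist_le_dist {X : Type*} [MetricSpace X] {A B : Set X} {a b : X}
    (ha : a ∈ A) (hb : b ∈ B) : setDist A B ≤ dist a b :=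
  csInf_le ⟨0, by rintro _ ⟨p, -, rfl⟩; exact dist_nonneg⟩ ⟨(a, b), ⟨ha, hb⟩, rfl⟩

namespace IsLengthSpace

variable {X : Type*} [MetricSpace X]

lemma exists_dist_lt_of_lt_pow_mul (hX : IsLengthSpace X) (k : ℕ) {x y : X} {r t : ℝ}
    (hr : 0 < r) (ht : 0 < t) (h : dist x y < 2 ^ k * (r + t - dist x y)) :
    ∃ w, dist x w < r ∧ dist w y < t := by
  induction k generalizing x y r t with
  | zero =>
    rw [pow_zero, one_mul] at h
    by_cases hxy : dist x y < r
    · exact ⟨y, hxy, by rwa [dist_self]⟩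
    · exact ⟨x, by rwa [dist_self], by linarith⟩
  | succ k ih =>
    set d := dist x y
    set s := r + t - d
    have hd : 0 ≤ d := dist_nonneg
    have hP : (1 : ℝ) ≤ 2 ^ k := one_le_pow₀ one_le_two
    rw [pow_succ] at h
    obtain ⟨η, hη, hηs, hηk⟩ : ∃ η > 0, 2 * η < s ∧ d / 2 + η < 2 ^ k * (s - 2 * η) := by
      have hs : 0 < s := by nlinarith
      set η := (2 ^ k * 2 * s - d) / (8 * (2 * 2 ^ k + 1))
      have hη : η * (2 * 2 ^ k + 1) = (2 ^ k * 2 * s - d) / 8 := by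
        simp only [η]; field_simp
      refine ⟨η, div_pos (by linarith) (by positivity), by nlinarith, by nlinarith⟩
    obtain ⟨m, hxm, hmy⟩ := hX x y η hη
    have hslack : s - 2 * η ≤ r + t - dist x m - dist m y := by linarith
    -- As `r + t > d + 2 * η`, one budget covers its half `[x, m]` or `[m, y]`;
    -- recurse on the other half, whose relative slack has roughly doubled.
    by_cases hrm : d / 2 + η < r
    · obtain ⟨w, hmw, hwy⟩ := ih (x := m) (r := r - dist x m) (by linarith) ht (by nlinarith)
      exact ⟨w, (dist_triangle x m w).trans_lt (by linarith), hwy⟩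
    · obtain ⟨w, hxw, hwm⟩ := ih (y := m) (t := t - dist m y) hr (by linarith) (by nlinarith)
      exact ⟨w, hxw, (dist_triangle w m y).trans_lt (by linarith)⟩

lemma exists_dist_lt_of_dist_lt_add (hX : IsLengthSpace X) {x y : X} {r t : ℝ}
    (hr : 0 < r) (ht : 0 < t) (h : dist x y < r + t) :
    ∃ w, dist x w < r ∧ dist w y < t := by
  obtain ⟨k, hk⟩ := pow_unbounded_of_one_lt (dist x y / (r + t - dist x y)) one_lt_two
  rw [div_lt_iff₀ (by linarith)] at hk
  exact hX.exists_dist_lt_of_lt_pow_mul k hr ht hk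

end IsLengthSpace

section CoveringChain

variable {ι X : Type*} [MetricSpace X] {U : ι → Set X} {D : ι → ι → ℝ} {ε C : ℝ}

lemma le_mul_succ_of_dist_lt_mul_succ (hX : IsLengthSpace X) (hε : 0 < ε)
    (hcov : ∀ y, ∃ i, y ∈ U i) (htri : ∀ i j k, D i k ≤ D i j + D j k)
    (hstep : ∀ i j y z, y ∈ U i → z ∈ U j → dist y z < ε → D i j ≤ C) (n : ℕ) :
    ∀ i j y z, y ∈ U i → z ∈ U j → dist y z < (n + 1) * ε → D i j ≤ C * (n + 1) := by
  induction n with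
  | zero =>
    intro i j y z hy hz hyz
    simpa using hstep i j y z hy hz (by simpa using hyz)
  | succ n ih =>
    intro i j y z hy hz hyz
    push_cast at hyz ⊢
    obtain ⟨w, hyw, hwz⟩ := hX.exists_dist_lt_of_dist_lt_add hε (by positivity)
      (show dist y z < ε + (n + 1) * ε by linarith)
    obtain ⟨l, hw⟩ := hcov w
    linarith [htri i l j, hstep i l y w hy hw hyw, ih l j w z hw hz hwz]

lemma le_mul_dist_div_add_one (hX : IsLengthSpace X) (hε : 0 < ε) (hC : 0 ≤ C)
    (hcov : ∀ y, ∃ i, y ∈ U i) (htri : ∀ i j k, D i k ≤ D i j + D j k)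
    (hstep : ∀ i j y z, y ∈ U i → z ∈ U j → dist y z < ε → D i j ≤ C)
    {i j : ι} {y z : X} (hy : y ∈ U i) (hz : z ∈ U j) :
    D i j ≤ C * (dist y z / ε + 1) := by
  set n := ⌊dist y z / ε⌋₊
  have hn : dist y z < (n + 1) * ε := by
    rw [← div_lt_iff₀ hε]; exact Nat.lt_floor_add_one _
  calc D i j ≤ C * (n + 1) :=
        le_mul_succ_of_dist_lt_mul_succ hX hε hcov htri hstep n i j y z hy hz hn
    _ ≤ C * (dist y z / ε + 1) := by
        gcongr; exact Nat.floor_le (by positivity)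

end CoveringChain

lemma le_two_of_mem_smul_of_dist_lt {G X : Type*} [Group G] [MetricSpace X] [MulAction G X]
    [IsIsometricSMul G X] {K : Set X} {ε : ℝ} {dΓ : G → G → ℝ}
    (hsep : ∀ g : G, ((g • K) ∩ K).Nonempty ∨ ε < setDist (g • K) K)
    (hinv : ∀ g a b : G, dΓ (g * a) (g * b) = dΓ a b)
    (hshort : ∀ g : G, ((g • K) ∩ K).Nonempty → dΓ 1 g ≤ 2)
    {g h : G} {y z : X} (hy : y ∈ g • K) (hz : z ∈ h • K) (hyz : dist y z < ε) :
    dΓ g h ≤ 2 := by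
  have hz' : g⁻¹ • z ∈ (g⁻¹ * h) • K := by
    rw [mul_smul]; exact Set.smul_mem_smul_set hz
  have hy' : g⁻¹ • y ∈ K := by
    rwa [← Set.mem_smul_set_iff_inv_smul_mem]
  have hdist : setDist ((g⁻¹ * h) • K) K ≤ dist y z := by
    calc setDist ((g⁻¹ * h) • K) K ≤ dist (g⁻¹ • z) (g⁻¹ • y) := setDist_le_dist hz' hy'
      _ = dist y z := by rw [dist_smul, dist_comm]
  have hmeet : ((g⁻¹ * h) • K ∩ K).Nonempty :=
    (hsep _).resolve_right (by linarith)
  calc dΓ g h = dΓ (g * 1) (g * (g⁻¹ * h)) := by rw [mul_one, mul_inv_cancel_left]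
    _ = dΓ 1 (g⁻¹ * h) := hinv _ _ _
    _ ≤ 2 := hshort _ hmeet

theorem hard_inequality_relative_milnor_svarc_general
    (G X : Type*) [Group G] [MetricSpace X] [MulAction G X] [IsIsometricSMul G X]
    (hlength : IsLengthSpace X)
    (K : Set X) (hcov : ∀ y : X, ∃ g : G, y ∈ g • K)
    (x₀ : X) (hx₀ : x₀ ∈ K)
    (ε : ℝ) (hε : 0 < ε)
    (hsep : ∀ g : G, ((g • K) ∩ K).Nonempty ∨ ε < setDist (g • K) K)
    (dΓ : G → G → ℝ)
    (htri : ∀ a b c : G, dΓ a c ≤ dΓ a b + dΓ b c)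
    (hinv : ∀ g a b : G, dΓ (g * a) (g * b) = dΓ a b)
    (hshort : ∀ g : G, ((g • K) ∩ K).Nonempty → dΓ 1 g ≤ 2) :
    ∀ p q : G, dΓ p q < (2 / ε) * dist (p • x₀) (q • x₀) + 4 := by
  intro p q
  have hstep : ∀ g h y z, y ∈ g • K → z ∈ h • K → dist y z < ε → dΓ g h ≤ 2 :=
    fun _ _ _ _ hy hz hyz => le_two_of_mem_smul_of_dist_lt hsep hinv hshort hy hz hyz
  calc dΓ p q ≤ 2 * (dist (p • x₀) (q • x₀) / ε + 1) :=
        le_mul_dist_div_add_one hlength hε zero_le_two hcov htri hstep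
          (Set.smul_mem_smul_set hx₀) (Set.smul_mem_smul_set hx₀)
    _ = 2 / ε * dist (p • x₀) (q • x₀) + 2 := by ring
    _ < 2 / ε * dist (p • x₀) (q • x₀) + 4 := by linarith

/-- **the hard inequality of the relative Milnor–Švarc lemma.**
Let `G` act by isometries on a length space `X`, discontinuously and cocompactly with
compact fundamental set `K ∋ x₀`, and let `ε > 0` be such that for all `g`, either
`gK ∩ K ≠ ∅` or `d(gK, K) > ε`. Let `dΓ` be a left-invariant (pseudo-)metric on `G`
(e.g. the coned-off Cayley graph metric on the orbit of the base vertex) in which every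
`g` with `gK ∩ K ≠ ∅` is within distance `2` of the identity. Then
`dΓ(p, q) < (2/ε)·d_X(p x₀, q x₀) + 4` for all `p, q ∈ G`; in particular the orbit map
is a quasi-isometric embedding. -/
theorem hard_inequality_relative_milnor_svarc
    (G X : Type*) [Group G] [MetricSpace X] [MulAction G X] [IsIsometricSMul G X]
    (hlength : IsLengthSpace X)
    (hdisc : ∀ x : X, ∃ δ > (0 : ℝ), ∀ g : G, g • x ≠ x → δ < dist x (g • x))
    (K : Set X) (hK : IsCompact K) (hcov : ∀ y : X, ∃ g : G, y ∈ g • K)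
    (x₀ : X) (hx₀ : x₀ ∈ K)
    (ε : ℝ) (hε : 0 < ε)
    (hsep : ∀ g : G, ((g • K) ∩ K).Nonempty ∨ ε < setDist (g • K) K)
    (dΓ : G → G → ℝ)
    (hself : ∀ a : G, dΓ a a = 0)
    (hsymm : ∀ a b : G, dΓ a b = dΓ b a)
    (htri : ∀ a b c : G, dΓ a c ≤ dΓ a b + dΓ b c)
    (hinv : ∀ g a b : G, dΓ (g * a) (g * b) = dΓ a b)
    (hshort : ∀ g : G, ((g • K) ∩ K).Nonempty → dΓ 1 g ≤ 2) :
    ∀ p q : G, dΓ p q < (2 / ε) * dist (p • x₀) (q • x₀) + 4 :=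
  hard_inequality_relative_milnor_svarc_general G X hlength K hcov x₀ hx₀ ε hε hsep dΓ htri hinv
    hshort
end
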